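/- Let f ∈ F_θ(Σ_A⁺) be real-valued and let λ = λ_f, ν = ν_f, h = h_f be as in the Ruelle–Perron–Frobenius theorem (L_f h = λ h, L_f* ν = λ ν, ∫ h dν = 1, h > 0). Then ‖h‖_θ ≤ (6 s₀^M b_f / (θ² (1−θ))) · e^{4 b_f/(1−θ)} · e^{2M |f|_∞}, where b_f = max{1, |f|_θ}. -/

import Mathlib

open MeasureTheory Real ENNReal

namespace SFT

/-- The one-sided subshift of finite type determined by the 0-1 matrix `A`. -/
def Space {s₀ : ℕ} (A : Matrix (Fin s₀) (Fin s₀) ℕ) : Type :=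
  {ξ : ℕ → Fin s₀ // ∀ i, A (ξ i) (ξ (i + 1)) = 1}

variable {s₀ : ℕ} {A : Matrix (Fin s₀) (Fin s₀) ℕ}

instance : TopologicalSpace (Space A) :=
  inferInstanceAs (TopologicalSpace {ξ : ℕ → Fin s₀ // ∀ i, A (ξ i) (ξ (i + 1)) = 1})

noncomputable instance : MeasurableSpace (Space A) := borel _
instance : BorelSpace (Space A) := ⟨rfl⟩

/-- The shift map σ. -/
def shift (x : Space A) : Space A := ⟨fun i => x.1 (i + 1), fun i => x.2 (i + 1)⟩

/-- `var_k g` as an extended real. -/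
noncomputable def evar (g : Space A → ℝ) (k : ℕ) : ℝ≥0∞ :=
  ⨆ (ξ : Space A) (η : Space A) (_ : ∀ i ≤ k, ξ.1 i = η.1 i), ENNReal.ofReal |g ξ - g η|

/-- `|g|_θ` as an extended real. -/
noncomputable def eHolder (θ : ℝ) (g : Space A → ℝ) : ℝ≥0∞ :=
  ⨆ k : ℕ, evar g k / ENNReal.ofReal (θ ^ k)

/-- `|g|_∞` as an extended real. -/
noncomputable def eSup (g : Space A → ℝ) : ℝ≥0∞ :=
  ⨆ ξ : Space A, ENNReal.ofReal |g ξ|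

/-- `|g|_θ`. -/
noncomputable def holderNorm (θ : ℝ) (g : Space A → ℝ) : ℝ := (eHolder θ g).toReal

/-- `|g|_∞`. -/
noncomputable def supNorm (g : Space A → ℝ) : ℝ := (eSup g).toReal

/-- `‖g‖_θ = |g|_θ + |g|_∞`. -/
noncomputable def fNorm (θ : ℝ) (g : Space A → ℝ) : ℝ := holderNorm θ g + supNorm g

/-- Membership in `F_θ(Σ_A⁺)`: finiteness of `‖g‖_θ`. -/
def MemF (θ : ℝ) (g : Space A → ℝ) : Prop := eHolder θ g + eSup g < ⊤


instance shiftFiberFinite (x : Space A) : Finite {y : Space A // shift y = x} := by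
  apply Finite.of_injective (fun y : {y : Space A // shift y = x} => y.1.1 0)
  rintro ⟨y, hy⟩ ⟨z, hz⟩ h
  apply Subtype.ext
  apply Subtype.ext
  funext n
  cases n with
  | zero => exact h
  | succ i =>
    have h1 : y.1 (i + 1) = x.1 i := congrFun (congrArg Subtype.val hy) i
    have h2 : z.1 (i + 1) = x.1 i := congrFun (congrArg Subtype.val hz) i
    rw [h1, h2]

/-- The Ruelle transfer operator `(L_f g)(x) = Σ_{σ y = x} e^{f(y)} g(y)`. -/
noncomputable def transfer (f g : Space A → ℝ) (x : Space A) : ℝ :=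
  ∑' y : {y : Space A // shift y = x}, Real.exp (f y.1) * g y.1

/-- Two functions are cohomologous if they differ by a continuous coboundary. -/
def Cohomologous (u v : Space A → ℝ) : Prop :=
  ∃ w : Space A → ℝ, Continuous w ∧ ∀ x, u x = v x + w (shift x) - w x

/-- ψ is cohomologous to a constant. -/
def CohomToConst (ψ : Space A → ℝ) : Prop := ∃ c : ℝ, Cohomologous ψ fun _ => c

/-- A finite measurable partition of the space. -/
def IsPartition {k : ℕ} (P : Fin k → Set (Space A)) : Prop :=
  (∀ i, MeasurableSet (P i)) ∧ (Pairwise fun i j => Disjoint (P i) (P j)) ∧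
    (⋃ i, P i) = Set.univ

/-- Entropy of the n-th join `⋁_{j<n} σ^{-j} P` of a partition. -/
noncomputable def joinEntropy (m : Measure (Space A)) {k : ℕ} (P : Fin k → Set (Space A))
    (n : ℕ) : ℝ :=
  ∑ a : Fin n → Fin k,
    Real.negMulLog (m (⋂ j : Fin n, shift^[(j : ℕ)] ⁻¹' P (a j))).toReal

/-- Measure-theoretic (Kolmogorov–Sinai) entropy of `m` with respect to the shift. -/
noncomputable def entropy (m : Measure (Space A)) : ℝ :=
  sSup {h | ∃ k : ℕ, ∃ P : Fin k → Set (Space A), IsPartition P ∧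
    h = ⨅ n : ℕ, joinEntropy m P (n + 1) / (n + 1)}

/-- σ-invariance of a measure. -/
def IsInvariant (m : Measure (Space A)) : Prop := m.map shift = m

/-- Topological pressure via the variational principle. -/
noncomputable def pressure (g : Space A → ℝ) : ℝ :=
  sSup {r | ∃ m : Measure (Space A), IsProbabilityMeasure m ∧ IsInvariant m ∧
    r = entropy m + ∫ x, g x ∂m}

/-- `m` is an equilibrium state of `g`. -/
def IsEqm (g : Space A → ℝ) (m : Measure (Space A)) : Prop :=
  IsProbabilityMeasure m ∧ IsInvariant m ∧ entropy m + ∫ x, g x ∂m = pressure g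

/-- The Ruelle–Perron–Frobenius data of `f`: an eigenvalue `lam > 0`, a probability
eigenmeasure `ν` of the dual operator, and a positive normalised eigenfunction `h ∈ F_θ`. -/
def IsRPF (θ : ℝ) (f : Space A → ℝ) (lam : ℝ) (ν : Measure (Space A))
    (h : Space A → ℝ) : Prop :=
  0 < lam ∧ IsProbabilityMeasure ν ∧
    (∀ g : Space A → ℝ, Continuous g → ∫ x, transfer f g x ∂ν = lam * ∫ x, g x ∂ν) ∧
    MemF θ h ∧ (∀ x, 0 < h x) ∧ (∀ x, transfer f h x = lam * h x) ∧ (∫ x, h x ∂ν) = 1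


/-!
Iterating the eigen-equation gives `λⁿ h(x) = Σ_{σⁿy = x} e^{Sₙf(y)} h(y)`. If `x, x'` share their
first `k + 1` symbols, replacing the tail `x` of each preimage `y` by `x'` matches the preimages of
`x` injectively with those of `x'`; matched points share `n + k + 1` symbols, so their Birkhoff sums
differ by at most `b θ^{k+1}/(1-θ)` and their `h`-values by `O(θ^{n+k})`. Letting `n → ∞` gives
`h(x) ≤ exp(b θ^{k+1}/(1-θ)) h(x')`. By aperiodicity every symbol begins an `M`-step preimage of any
point, so with `k = 0` any two values of `h` compare up to `s₀^M e^{2M|f|_∞}`; as `∫ h dν = 1`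
forces `h ≤ 1` somewhere, this bounds `|h|_∞`, and `e^t - 1 ≤ t e^t` turns the ratio bound into a
bound on `|h|_θ`.
-/

open Filter Topology

lemma shift_iterate_apply (n : ℕ) (y : Space A) (i : ℕ) :
    (shift^[n] y).1 i = y.1 (i + n) := by
  induction n generalizing y with
  | zero => rfl
  | succ n ih => exact (ih (shift y)).trans (congrArg y.1 (Nat.add_assoc i n 1))

lemma apply_of_shift_iterate_eq {n i : ℕ} {x y : Space A} (hy : shift^[n] y = x) (hi : n ≤ i) :
    y.1 i = x.1 (i - n) := by
  rw [← hy, shift_iterate_apply, Nat.sub_add_cancel hi]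

lemma apply_self_of_shift_iterate_eq {n : ℕ} {x y : Space A} (hy : shift^[n] y = x) :
    y.1 n = x.1 0 := by
  simpa using apply_of_shift_iterate_eq hy le_rfl

abbrev Fiber (n : ℕ) (x : Space A) : Type := {y : Space A // shift^[n] y = x}

lemma fiber_prefix_injective (n : ℕ) (x : Space A) :
    Function.Injective fun y : Fiber n x => fun i : Fin n => y.1.1 i := by
  rintro ⟨y, hy⟩ ⟨z, hz⟩ hyz
  refine Subtype.ext (Subtype.ext (funext fun i => ?_))
  rcases lt_or_ge i n with hi | hi
  · exact congrFun hyz ⟨i, hi⟩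
  · rw [apply_of_shift_iterate_eq hy hi, apply_of_shift_iterate_eq hz hi]

instance (n : ℕ) (x : Space A) : Finite (Fiber n x) :=
  Finite.of_injective _ (fiber_prefix_injective n x)

lemma card_fiber_le (n : ℕ) (x : Space A) : Nat.card (Fiber n x) ≤ s₀ ^ n := by
  simpa using Nat.card_le_card_of_injective _ (fiber_prefix_injective n x)

def Agree (k : ℕ) (ξ η : Space A) : Prop := ∀ i ≤ k, ξ.1 i = η.1 i

lemma Agree.symm {k : ℕ} {ξ η : Space A} (h : Agree k ξ η) : Agree k η ξ :=
  fun i hi => (h i hi).symm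

lemma Agree.shift_iterate {m j : ℕ} {ξ η : Space A} (h : Agree (m + j) ξ η) :
    Agree m (shift^[j] ξ) (shift^[j] η) := fun i hi => by
  simp only [shift_iterate_apply]
  exact h _ (by omega)

/-- `var_k g ≤ C θ^k` for every `k`, i.e. `|g|_θ ≤ C`. -/
def HasVarBound (θ C : ℝ) (g : Space A → ℝ) : Prop :=
  ∀ k ξ η, Agree k ξ η → |g ξ - g η| ≤ C * θ ^ k

section Norms

variable {θ C : ℝ} {g : Space A → ℝ}

lemma HasVarBound.nonneg (hg : HasVarBound θ C g) (ξ : Space A) : 0 ≤ C := by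
  simpa using hg 0 ξ ξ fun _ _ => rfl

lemma HasVarBound.mono {C' : ℝ} (hg : HasVarBound θ C g) (hC : C ≤ C') (hθ : 0 ≤ θ) :
    HasVarBound θ C' g := fun k ξ η hag =>
  (hg k ξ η hag).trans (mul_le_mul_of_nonneg_right hC (pow_nonneg hθ k))

lemma MemF.eHolder_ne_top (hg : MemF θ g) : eHolder θ g ≠ ⊤ :=
  (le_self_add.trans_lt hg).ne

lemma MemF.eSup_ne_top (hg : MemF θ g) : eSup g ≠ ⊤ :=
  (le_add_self.trans_lt hg).ne

lemma MemF.abs_le_supNorm (hg : MemF θ g) (ξ : Space A) : |g ξ| ≤ supNorm g :=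
  (ENNReal.ofReal_le_iff_le_toReal hg.eSup_ne_top).mp
    (le_iSup (fun ξ => ENNReal.ofReal |g ξ|) ξ)

lemma MemF.hasVarBound (hθ : 0 < θ) (hg : MemF θ g) : HasVarBound θ (holderNorm θ g) g := by
  intro k ξ η hag
  have hθk : 0 < θ ^ k := pow_pos hθ k
  have hvar : evar g k ≤ eHolder θ g * ENNReal.ofReal (θ ^ k) :=
    (ENNReal.div_le_iff (by simpa using hθk) ENNReal.ofReal_ne_top).mp
      (le_iSup (fun k => evar g k / ENNReal.ofReal (θ ^ k)) k)
  have hle := (le_iSup₂_of_le ξ η (le_iSup_of_le hag le_rfl)).trans hvar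
  rw [ENNReal.ofReal_le_iff_le_toReal (ENNReal.mul_ne_top hg.eHolder_ne_top ENNReal.ofReal_ne_top),
    ENNReal.toReal_mul, ENNReal.toReal_ofReal hθk.le] at hle
  exact hle

lemma supNorm_le (hC : 0 ≤ C) (hg : ∀ ξ, |g ξ| ≤ C) : supNorm g ≤ C :=
  ENNReal.toReal_le_of_le_ofReal hC (iSup_le fun ξ => ENNReal.ofReal_le_ofReal (hg ξ))

lemma holderNorm_le (hθ : 0 < θ) (hC : 0 ≤ C) (hg : HasVarBound θ C g) : holderNorm θ g ≤ C := by
  refine ENNReal.toReal_le_of_le_ofReal hC (iSup_le fun k => ?_)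
  rw [ENNReal.div_le_iff (by simpa using pow_pos hθ k) ENNReal.ofReal_ne_top,
    ← ENNReal.ofReal_mul hC]
  exact iSup₂_le fun ξ η => iSup_le fun hag => ENNReal.ofReal_le_ofReal (hg k ξ η hag)

lemma eventually_agree (k : ℕ) (ξ : Space A) : ∀ᶠ η in 𝓝 ξ, Agree k η ξ := by
  refine (Filter.eventually_all_finite (Set.finite_le_nat k)).mpr fun i _ => ?_
  have hcont : Continuous fun η : Space A => η.1 i :=
    (continuous_apply i).comp continuous_subtype_val
  simpa [nhds_discrete] using hcont.tendsto ξ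

lemma HasVarBound.continuous (hθ0 : 0 ≤ θ) (hθ1 : θ < 1) (hg : HasVarBound θ C g) :
    Continuous g := by
  refine continuous_iff_continuousAt.mpr fun ξ => Metric.tendsto_nhds.mpr fun ε hε => ?_
  have hsmall : Tendsto (fun k : ℕ => C * θ ^ k) atTop (𝓝 0) := by
    simpa using (tendsto_pow_atTop_nhds_zero_of_lt_one hθ0 hθ1).const_mul C
  obtain ⟨k, hk⟩ := (hsmall.eventually (gt_mem_nhds hε)).exists
  filter_upwards [eventually_agree k ξ] with η hη
  exact (hg k η ξ hη).trans_lt hk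

end Norms

instance : CompactSpace (Space A) := by
  have hclosed : IsClosed {ξ : ℕ → Fin s₀ | ∀ i, A (ξ i) (ξ (i + 1)) = 1} := by
    rw [Set.ofPred_forall]
    exact isClosed_iInter fun i => isClosed_eq (by fun_prop) continuous_const
  exact isCompact_iff_compactSpace.mp hclosed.isCompact

def fiberSuccEquiv (n : ℕ) (x : Space A) :
    Fiber (n + 1) x ≃ Σ z : {z : Space A // shift z = x}, Fiber n z.1 where
  toFun y := ⟨⟨shift^[n] y.1, by rw [← Function.iterate_succ_apply' shift n y.1]; exact y.2⟩,
    ⟨y.1, rfl⟩⟩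
  invFun p := ⟨p.2.1, by rw [Function.iterate_succ_apply', p.2.2]; exact p.1.2⟩
  left_inv _ := rfl
  right_inv := by
    rintro ⟨⟨z, hz⟩, ⟨y, hy⟩⟩
    simp only at hy
    subst hy
    rfl

lemma transfer_iterate_apply (f g : Space A → ℝ) (n : ℕ) (x : Space A) :
    (transfer f)^[n] g x = ∑' y : Fiber n x, exp (birkhoffSum shift f n y.1) * g y.1 := by
  induction n generalizing x with
  | zero =>
    rw [tsum_eq_single (⟨x, rfl⟩ : Fiber 0 x) fun y hy => (hy (Subtype.ext y.2)).elim]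
    simp
  | succ n ih =>
    rw [Function.iterate_succ_apply', transfer, ← (fiberSuccEquiv n x).symm.tsum_eq,
      Summable.tsum_sigma Summable.of_finite]
    refine tsum_congr fun z => ?_
    rw [ih, ← tsum_mul_left]
    refine tsum_congr fun y => ?_
    simp only [fiberSuccEquiv, Equiv.coe_fn_symm_mk, birkhoffSum_succ, exp_add, y.2]
    ring

lemma transfer_mul_left (f g : Space A → ℝ) (c : ℝ) (x : Space A) :
    transfer f (fun y => c * g y) x = c * transfer f g x := by
  simp only [transfer, ← tsum_mul_left, mul_left_comm]

lemma eigen_eq_tsum_fiber {f h : Space A → ℝ} {lam : ℝ}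
    (heig : ∀ x, transfer f h x = lam * h x) (n : ℕ) (x : Space A) :
    lam ^ n * h x = ∑' y : Fiber n x, exp (birkhoffSum shift f n y.1) * h y.1 := by
  have hiter : (transfer f)^[n] h = fun x => lam ^ n * h x := by
    induction n with
    | zero => simp
    | succ n ih =>
      funext x
      rw [Function.iterate_succ_apply', ih, transfer_mul_left, heig, pow_succ, mul_assoc]
  rw [← transfer_iterate_apply, hiter]

def cons (a : Fin s₀) (z : Space A) (ha : A a (z.1 0) = 1) : Space A :=
  ⟨fun | 0 => a | i + 1 => z.1 i, fun | 0 => ha | i + 1 => z.2 i⟩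

lemma shift_cons (a : Fin s₀) (z : Space A) (ha : A a (z.1 0) = 1) : shift (cons a z ha) = z :=
  rfl

lemma exists_shift_iterate_eq_of_pow_pos (h01 : ∀ i j, A i j = 0 ∨ A i j = 1) {m : ℕ}
    (a : Fin s₀) (x : Space A) (hm : 0 < (A ^ m) a (x.1 0)) :
    ∃ z : Space A, shift^[m] z = x ∧ z.1 0 = a := by
  induction m generalizing a with
  | zero =>
    refine ⟨x, rfl, ?_⟩
    by_contra hne
    simp [Matrix.one_apply_ne' hne] at hm
  | succ m ih =>
    rw [pow_succ', Matrix.mul_apply] at hm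
    obtain ⟨t, -, ht⟩ := Finset.exists_ne_zero_of_sum_ne_zero hm.ne'
    obtain ⟨z, hz, rfl⟩ := ih t (Nat.pos_of_ne_zero (right_ne_zero_of_mul ht))
    have hat : A a (z.1 0) = 1 := (h01 a _).resolve_left (left_ne_zero_of_mul ht)
    exact ⟨cons a z hat, by rw [Function.iterate_succ_apply, shift_cons, hz], rfl⟩

def splice (n : ℕ) (y x' : Space A) (h : y.1 n = x'.1 0) : Space A :=
  ⟨fun i => if i < n then y.1 i else x'.1 (i - n), fun i => by
    by_cases h1 : i + 1 < n
    · simpa [h1, show i < n by omega] using y.2 i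
    by_cases h2 : i < n
    · have hn : i + 1 = n := by omega
      simp only [h2, if_true, hn, Nat.sub_self, ← h]
      simpa [hn] using y.2 i
    · simpa [h1, h2, show i + 1 - n = i - n + 1 by omega] using x'.2 (i - n)⟩

lemma splice_apply_of_lt {n i : ℕ} (y x' : Space A) (h : y.1 n = x'.1 0) (hi : i < n) :
    (splice n y x' h).1 i = y.1 i :=
  if_pos hi

lemma shift_iterate_splice (n : ℕ) (y x' : Space A) (h : y.1 n = x'.1 0) :
    shift^[n] (splice n y x' h) = x' := by
  refine Subtype.ext (funext fun i => ?_)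
  rw [shift_iterate_apply]
  simp [splice]

lemma agree_splice {n k : ℕ} {x x' y : Space A} (hy : shift^[n] y = x) (hag : Agree k x x')
    (h : y.1 n = x'.1 0) : Agree (n + k) y (splice n y x' h) := by
  intro i hi
  rcases lt_or_ge i n with hin | hin
  · exact (splice_apply_of_lt y x' h hin).symm
  · rw [apply_of_shift_iterate_eq hy hin,
      apply_of_shift_iterate_eq (shift_iterate_splice n y x' h) hin]
    exact hag _ (by omega)

def fiberPair (n : ℕ) {x x' : Space A} (h0 : x.1 0 = x'.1 0) (y : Fiber n x) : Fiber n x' :=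
  ⟨splice n y.1 x' ((apply_self_of_shift_iterate_eq y.2).trans h0), shift_iterate_splice ..⟩

lemma agree_fiberPair {n k : ℕ} {x x' : Space A} (hag : Agree k x x') (y : Fiber n x) :
    Agree (n + k) y.1 (fiberPair n (hag 0 k.zero_le) y).1 :=
  agree_splice y.2 hag ((apply_self_of_shift_iterate_eq y.2).trans (hag 0 k.zero_le))

lemma fiberPair_injective (n : ℕ) {x x' : Space A} (h0 : x.1 0 = x'.1 0) :
    Function.Injective (fiberPair n h0) := fun y z hyz =>
  fiber_prefix_injective n x <| funext fun i => by
    simpa [fiberPair, splice_apply_of_lt _ _ _ i.2] using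
      congrArg (fun w : Fiber n x' => w.1.1 i) hyz

lemma sum_range_pow_sub_le {θ : ℝ} (hθ0 : 0 ≤ θ) (hθ1 : θ < 1) (n : ℕ) :
    ∑ j ∈ Finset.range n, θ ^ (n - j) ≤ θ / (1 - θ) := by
  have hreflect : ∑ j ∈ Finset.range n, θ ^ (n - j) = ∑ i ∈ Finset.Ico 1 (n + 1), θ ^ i := by
    rw [Finset.sum_Ico_eq_sum_range, Nat.add_sub_cancel,
      ← Finset.sum_range_reflect (fun j => θ ^ (1 + j)) n]
    refine Finset.sum_congr (by simp) fun j hj => ?_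
    rw [Finset.mem_range] at hj
    congr 1
    omega
  simpa [hreflect] using geom_sum_Ico_le_of_lt_one hθ0 hθ1 (m := 1) (n := n + 1)

lemma abs_birkhoffSum_sub_le {θ b : ℝ} {f : Space A → ℝ} (hθ0 : 0 ≤ θ) (hθ1 : θ < 1)
    (hf : HasVarBound θ b f) {n k : ℕ} {y y' : Space A} (hyy : Agree (n + k) y y') :
    |birkhoffSum shift f n y - birkhoffSum shift f n y'| ≤ b * θ / (1 - θ) * θ ^ k := by
  have hb := hf.nonneg y
  calc |birkhoffSum shift f n y - birkhoffSum shift f n y'|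
      ≤ ∑ j ∈ Finset.range n, dist (f (shift^[j] y)) (f (shift^[j] y')) :=
        by rw [← Real.dist_eq]; exact dist_birkhoffSum_birkhoffSum_le ..
    _ ≤ ∑ j ∈ Finset.range n, b * θ ^ k * θ ^ (n - j) := by
        refine Finset.sum_le_sum fun j hj => ?_
        rw [Finset.mem_range] at hj
        rw [Real.dist_eq, mul_assoc, ← pow_add]
        exact hf _ _ _ (Agree.shift_iterate (by rwa [show k + (n - j) + j = n + k by omega]))
    _ = b * θ ^ k * ∑ j ∈ Finset.range n, θ ^ (n - j) := (Finset.mul_sum ..).symm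
    _ ≤ b * θ ^ k * (θ / (1 - θ)) := by
        gcongr
        exact sum_range_pow_sub_le hθ0 hθ1 n
    _ = b * θ / (1 - θ) * θ ^ k := by ring

lemma abs_birkhoffSum_le {F : ℝ} {f : Space A → ℝ} (hF : ∀ ξ, |f ξ| ≤ F) (n : ℕ) (y : Space A) :
    |birkhoffSum shift f n y| ≤ n * F :=
  (Finset.abs_sum_le_sum_abs _ _).trans <| by
    simpa using Finset.sum_le_card_nsmul (Finset.range n) _ F fun j _ => hF _

lemma exp_sub_one_le_mul_exp (t : ℝ) : exp t - 1 ≤ t * exp t := by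
  have h := mul_le_mul_of_nonneg_right (one_sub_le_exp_neg t) (exp_pos t).le
  rw [← exp_add, neg_add_cancel, exp_zero] at h
  linarith

section Eigenfunction

variable {θ b lam : ℝ} {f h : Space A → ℝ}

lemma eigen_le_of_agree_of_forall_le {H m : ℝ} (hθ0 : 0 ≤ θ) (hθ1 : θ < 1) (hlam : 0 < lam)
    (heig : ∀ x, transfer f h x = lam * h x) (hf : HasVarBound θ b f) (hh : HasVarBound θ H h)
    (hm : 0 < m) (hmin : ∀ ξ, m ≤ h ξ) {k : ℕ} {x x' : Space A} (hag : Agree k x x') (n : ℕ) :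
    h x ≤ exp (b * θ / (1 - θ) * θ ^ k) * (1 + H * θ ^ (n + k) / m) * h x' := by
  set S := birkhoffSum shift f n
  set ψ := fiberPair n (hag 0 k.zero_le)
  set c := exp (b * θ / (1 - θ) * θ ^ k) * (1 + H * θ ^ (n + k) / m)
  have hpos : ∀ ξ, 0 < h ξ := fun ξ => hm.trans_le (hmin ξ)
  have hH := hh.nonneg x
  have hterm (y : Fiber n x) : exp (S y.1) * h y.1 ≤ c * (exp (S (ψ y).1) * h (ψ y).1) := by
    have hyy : Agree (n + k) y.1 (ψ y).1 := agree_fiberPair hag y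
    have hS : S y.1 ≤ b * θ / (1 - θ) * θ ^ k + S (ψ y).1 := by
      linarith [(abs_le.mp (abs_birkhoffSum_sub_le hθ0 hθ1 hf hyy)).2]
    have hε : H * θ ^ (n + k) ≤ H * θ ^ (n + k) / m * h (ψ y).1 := by
      rw [div_mul_eq_mul_div, le_div_iff₀ hm]
      exact mul_le_mul_of_nonneg_left (hmin _) (by positivity)
    have hh' : h y.1 ≤ (1 + H * θ ^ (n + k) / m) * h (ψ y).1 := by
      linarith [(abs_le.mp (hh _ _ _ hyy)).2]
    calc exp (S y.1) * h y.1
        ≤ exp (b * θ / (1 - θ) * θ ^ k + S (ψ y).1) *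
            ((1 + H * θ ^ (n + k) / m) * h (ψ y).1) :=
          mul_le_mul (exp_le_exp.mpr hS) hh' (hpos _).le (exp_pos _).le
      _ = c * (exp (S (ψ y).1) * h (ψ y).1) := by rw [exp_add]; ring
  have hsum : lam ^ n * h x ≤ lam ^ n * (c * h x') := by
    calc lam ^ n * h x = ∑' y : Fiber n x, exp (S y.1) * h y.1 := eigen_eq_tsum_fiber heig n x
      _ ≤ ∑' y : Fiber n x, c * (exp (S (ψ y).1) * h (ψ y).1) :=
          Summable.tsum_le_tsum hterm .of_finite .of_finite
      _ = c * ∑' y : Fiber n x, (fun y' : Fiber n x' => exp (S y'.1) * h y'.1) (ψ y) :=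
          tsum_mul_left
      _ ≤ c * ∑' y' : Fiber n x', exp (S y'.1) * h y'.1 := by
          gcongr
          exact tsum_comp_le_tsum_of_inj (f := fun y' : Fiber n x' => exp (S y'.1) * h y'.1)
            .of_finite (fun y' => (mul_pos (exp_pos _) (hpos _)).le) (fiberPair_injective n _)
      _ = lam ^ n * (c * h x') := by rw [← eigen_eq_tsum_fiber heig n x']; ring
  exact le_of_mul_le_mul_left hsum (pow_pos hlam n)

lemma eigen_le_exp_mul_of_agree {H : ℝ} (hθ0 : 0 ≤ θ) (hθ1 : θ < 1) (hlam : 0 < lam)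
    (heig : ∀ x, transfer f h x = lam * h x) (hpos : ∀ ξ, 0 < h ξ) (hf : HasVarBound θ b f)
    (hh : HasVarBound θ H h) {k : ℕ} {x x' : Space A} (hag : Agree k x x') :
    h x ≤ exp (b * θ / (1 - θ) * θ ^ k) * h x' := by
  obtain ⟨ξ₀, -, hmin⟩ := isCompact_univ.exists_isMinOn ⟨x, Set.mem_univ x⟩
    (hh.continuous hθ0 hθ1).continuousOn
  have hsmall : Tendsto (fun n : ℕ => θ ^ (n + k)) atTop (𝓝 0) :=
    (tendsto_pow_atTop_nhds_zero_of_lt_one hθ0 hθ1).comp (tendsto_add_atTop_nat k)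
  have hlim : Tendsto (fun n : ℕ => exp (b * θ / (1 - θ) * θ ^ k) *
      (1 + H * θ ^ (n + k) / h ξ₀) * h x') atTop (𝓝 (exp (b * θ / (1 - θ) * θ ^ k) * h x')) := by
    simpa using (((hsmall.const_mul H).div_const (h ξ₀)).const_add 1).const_mul _ |>.mul_const _
  exact ge_of_tendsto' hlim (eigen_le_of_agree_of_forall_le hθ0 hθ1 hlam heig hf hh (hpos ξ₀)
    (fun ξ => isMinOn_iff.mp hmin ξ (Set.mem_univ ξ)) hag)

lemma eigen_le_of_exists_shift_iterate_eq {M : ℕ} {F C : ℝ} (hlam : 0 < lam)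
    (heig : ∀ x, transfer f h x = lam * h x) (hpos : ∀ ξ, 0 < h ξ) (hF : ∀ ξ, |f ξ| ≤ F)
    (hpre : ∀ (a : Fin s₀) (x : Space A), ∃ z : Space A, shift^[M] z = x ∧ z.1 0 = a)
    (hr : ∀ y z : Space A, y.1 0 = z.1 0 → h y ≤ C * h z) (x x' : Space A) :
    h x ≤ s₀ ^ M * exp (2 * M * F) * C * h x' := by
  set S := birkhoffSum shift f M
  have hC : 0 ≤ C :=
    zero_le_one.trans <| le_of_mul_le_mul_right (by simpa using hr x x rfl) (hpos x)
  set c := exp (2 * M * F) * C * (lam ^ M * h x')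
  have hterm (y : Fiber M x) : exp (S y.1) * h y.1 ≤ c := by
    obtain ⟨z, hz, hz0⟩ := hpre (y.1.1 0) x'
    have hz_le : exp (S z) * h z ≤ lam ^ M * h x' := by
      rw [eigen_eq_tsum_fiber heig M x']
      exact Summable.le_tsum (f := fun w : Fiber M x' => exp (S w.1) * h w.1) .of_finite ⟨z, hz⟩
        fun w _ => (mul_pos (exp_pos _) (hpos _)).le
    have hSy := (abs_le.mp (abs_birkhoffSum_le hF M y.1)).2
    have hSz := (abs_le.mp (abs_birkhoffSum_le hF M z)).1
    calc exp (S y.1) * h y.1 ≤ exp (M * F) * (C * h z) :=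
          mul_le_mul (exp_le_exp.mpr hSy) (hr _ _ hz0.symm) (hpos _).le (exp_pos _).le
      _ = exp (2 * M * F) * C * (exp (-(M * F)) * h z) := by
          rw [show 2 * (M : ℝ) * F = M * F + M * F by ring, exp_add, exp_neg]
          field_simp
      _ ≤ exp (2 * M * F) * C * (exp (S z) * h z) := by
          gcongr
          exact (hpos z).le
      _ ≤ c := mul_le_mul_of_nonneg_left hz_le (mul_nonneg (exp_pos _).le hC)
  have : Fintype (Fiber M x) := Fintype.ofFinite _
  have hsum : lam ^ M * h x ≤ lam ^ M * (s₀ ^ M * exp (2 * M * F) * C * h x') := by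
    calc lam ^ M * h x = ∑ y : Fiber M x, exp (S y.1) * h y.1 := by
          rw [eigen_eq_tsum_fiber heig M x, tsum_fintype]
      _ ≤ Nat.card (Fiber M x) * c := by
          simpa [Nat.card_eq_fintype_card] using
            Finset.sum_le_card_nsmul Finset.univ _ c fun y _ => hterm y
      _ ≤ s₀ ^ M * c := by
          gcongr
          · exact mul_nonneg (mul_nonneg (exp_pos _).le hC) (mul_pos (pow_pos hlam M) (hpos x')).le
          · exact_mod_cast card_fiber_le M x
      _ = lam ^ M * (s₀ ^ M * exp (2 * M * F) * C * h x') := by ring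
  exact le_of_mul_le_mul_left hsum (pow_pos hlam M)

lemma hasVarBound_of_le_exp_mul {D S : ℝ} (hθ0 : 0 ≤ θ) (hθ1 : θ ≤ 1) (hD : 0 ≤ D)
    (hpos : ∀ ξ, 0 < h ξ) (hS : ∀ ξ, h ξ ≤ S)
    (hr : ∀ k ξ η, Agree k ξ η → h ξ ≤ exp (D * θ ^ k) * h η) :
    HasVarBound θ (S * D * exp D) h := by
  have key (k : ℕ) (ξ η : Space A) (hag : Agree k ξ η) : h ξ - h η ≤ S * D * exp D * θ ^ k := by
    have hθk : 0 ≤ θ ^ k := pow_nonneg hθ0 k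
    have htD : D * θ ^ k ≤ D := mul_le_of_le_one_right hD (pow_le_one₀ hθ0 hθ1)
    calc h ξ - h η ≤ (exp (D * θ ^ k) - 1) * h η := by linarith [hr k ξ η hag]
      _ ≤ D * θ ^ k * exp (D * θ ^ k) * h η :=
          mul_le_mul_of_nonneg_right (exp_sub_one_le_mul_exp _) (hpos η).le
      _ ≤ D * θ ^ k * exp D * S := by
          gcongr
          · exact (hpos η).le
          · exact hS η
      _ = S * D * exp D * θ ^ k := by ring
  exact fun k ξ η hag => abs_sub_le_iff.mpr ⟨key k ξ η hag, key k η ξ hag.symm⟩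

end Eigenfunction

lemma exp_mul_one_add_mul_exp_le {θ b : ℝ} (hθ0 : 0 < θ) (hθ1 : θ < 1) (hb : 1 ≤ b) :
    exp (b * θ / (1 - θ)) * (1 + b * θ / (1 - θ) * exp (b * θ / (1 - θ))) ≤
      6 * b / (θ ^ 2 * (1 - θ)) * exp (4 * b / (1 - θ)) := by
  have h1θ : 0 < 1 - θ := by linarith
  set B := b / (1 - θ)
  have hB : 1 ≤ B := by rw [le_div_iff₀ h1θ]; linarith
  have hDB : b * θ / (1 - θ) ≤ B :=
    div_le_div_of_nonneg_right (mul_le_of_le_one_right (by linarith) hθ1.le) h1θ.le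
  have hBexp : 1 ≤ B * exp B := one_le_mul_of_one_le_of_one_le hB (one_le_exp (by linarith))
  have hcoef : 2 * B ≤ 6 * b / (θ ^ 2 * (1 - θ)) := by
    rw [mul_div_assoc', div_le_div_iff₀ h1θ (by positivity)]
    have hθ2 : θ ^ 2 ≤ 1 := pow_le_one₀ hθ0.le hθ1.le
    nlinarith [mul_le_mul_of_nonneg_left hθ2 (mul_nonneg (by linarith : (0 : ℝ) ≤ b) h1θ.le)]
  calc exp (b * θ / (1 - θ)) * (1 + b * θ / (1 - θ) * exp (b * θ / (1 - θ)))
      ≤ exp B * (1 + B * exp B) := by gcongr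
    _ ≤ 2 * B * exp (B + B) := by rw [exp_add]; nlinarith [exp_pos B]
    _ ≤ 6 * b / (θ ^ 2 * (1 - θ)) * exp (4 * b / (1 - θ)) := by
      gcongr
      rw [mul_div_assoc]
      linarith

theorem statement2_general
    {s₀ M : ℕ} {A : Matrix (Fin s₀) (Fin s₀) ℕ} {θ : ℝ}
    (h01 : ∀ i j, A i j = 0 ∨ A i j = 1)
    (hap : ∀ i j, 0 < (A ^ M) i j) (hθ0 : 0 < θ) (hθ1 : θ < 1)
    (f : Space A → ℝ) (hf : MemF θ f)
    (lam : ℝ) (ν : Measure (Space A)) (h : Space A → ℝ) (hRPF : IsRPF θ f lam ν h) :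
    fNorm θ h ≤ 6 * (s₀ : ℝ) ^ M * max 1 (holderNorm θ f) / (θ ^ 2 * (1 - θ)) *
      Real.exp (4 * max 1 (holderNorm θ f) / (1 - θ)) *
      Real.exp (2 * (M : ℝ) * supNorm f) := by
  obtain ⟨hlam, hν, -, hh, hpos, heig, hint⟩ := hRPF
  have hb : 1 ≤ max 1 (holderNorm θ f) := le_max_left _ _
  set b := max 1 (holderNorm θ f)
  set D := b * θ / (1 - θ)
  set K : ℝ := s₀ ^ M * exp (2 * M * supNorm f)
  have hD : 0 ≤ D := div_nonneg (mul_nonneg (by linarith) hθ0.le) (by linarith)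
  have hfb : HasVarBound θ b f := (hf.hasVarBound hθ0).mono (le_max_right _ _) hθ0.le
  have hratio (k : ℕ) (ξ η : Space A) (hag : Agree k ξ η) : h ξ ≤ exp (D * θ ^ k) * h η :=
    eigen_le_exp_mul_of_agree hθ0.le hθ1 hlam heig hpos hfb (hh.hasVarBound hθ0) hag
  have hcompare (ξ η : Space A) : h ξ ≤ K * exp D * h η := by
    simpa using eigen_le_of_exists_shift_iterate_eq hlam heig hpos hf.abs_le_supNorm
      (fun a x => exists_shift_iterate_eq_of_pow_pos h01 a x (hap a _))
      (fun y z hyz => by simpa using hratio 0 y z fun i hi => by rwa [Nat.le_zero.mp hi]) ξ η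
  obtain ⟨ξ₀, hξ₀⟩ : ∃ ξ₀, h ξ₀ ≤ 1 := hint ▸ exists_le_integral (Integrable.of_bound
    ((hh.hasVarBound hθ0).continuous hθ0.le hθ1).aestronglyMeasurable (supNorm h)
    (ae_of_all _ hh.abs_le_supNorm))
  have hsup : supNorm h ≤ K * exp D := supNorm_le (by positivity) fun ξ => by
    rw [abs_of_pos (hpos ξ)]
    exact (hcompare ξ ξ₀).trans (mul_le_of_le_one_right (by positivity) hξ₀)
  have hhol : holderNorm θ h ≤ supNorm h * D * exp D :=
    holderNorm_le hθ0 (mul_nonneg (mul_nonneg ENNReal.toReal_nonneg hD) (exp_pos D).le)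
      (hasVarBound_of_le_exp_mul hθ0.le hθ1.le hD hpos
      (fun ξ => (le_abs_self _).trans (hh.abs_le_supNorm ξ)) hratio)
  calc fNorm θ h ≤ supNorm h * (1 + D * exp D) := by rw [fNorm]; linarith
    _ ≤ K * (exp D * (1 + D * exp D)) := by
      rw [← mul_assoc]
      gcongr
    _ ≤ K * (6 * b / (θ ^ 2 * (1 - θ)) * exp (4 * b / (1 - θ))) :=
      mul_le_mul_of_nonneg_left (exp_mul_one_add_mul_exp_le hθ0 hθ1 hb) (by positivity)
    _ = _ := by ring

theorem statement2
    {s₀ M : ℕ} {A : Matrix (Fin s₀) (Fin s₀) ℕ} {θ : ℝ}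
    (hs₀ : 2 ≤ s₀) (h01 : ∀ i j, A i j = 0 ∨ A i j = 1) (hM : 0 < M)
    (hap : ∀ i j, 0 < (A ^ M) i j) (hθ0 : 0 < θ) (hθ1 : θ < 1)
    (f : Space A → ℝ) (hf : MemF θ f)
    (lam : ℝ) (ν : Measure (Space A)) (h : Space A → ℝ) (hRPF : IsRPF θ f lam ν h) :
    fNorm θ h ≤ 6 * (s₀ : ℝ) ^ M * max 1 (holderNorm θ f) / (θ ^ 2 * (1 - θ)) *
      Real.exp (4 * max 1 (holderNorm θ f) / (1 - θ)) *
      Real.exp (2 * (M : ℝ) * supNorm f) :=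
  statement2_general h01 hap hθ0 hθ1 f hf lam ν h hRPF

end SFT
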